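/- For any natural number n ≥ 1, G_n = ∑_{k=1}^{n} (-1)^{k-1} · a_k · S(n,k), where G_n are the Genocchi numbers, S(n,k) are the Stirling numbers of the second kind, and a_k = (k!/2^k) · ∑_{j=1}^{k} 2^j/j. -/

import Mathlib

/-- Genocchi numbers, defined by the EGF `2x/(eˣ+1) = ∑ Gₙ xⁿ/n!`. -/
noncomputable def genocchi (n : ℕ) : ℚ :=
  (Nat.factorial n : ℚ) *
    PowerSeries.coeff n (2 * PowerSeries.X * (PowerSeries.exp ℚ + 1)⁻¹)

/-- Stirling numbers of the second kind, via the standard recurrence; these are the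
unique numbers satisfying `X^n = ∑ₖ S(n,k)·X(X-1)⋯(X-k+1)`. -/
def stirlingSnd : ℕ → ℕ → ℕ
  | 0, 0 => 1
  | 0, _ + 1 => 0
  | _ + 1, 0 => 0
  | n + 1, k + 1 => stirlingSnd n k + (k + 1) * stirlingSnd n (k + 1)

/-! With `t = (1 - eˣ)/2` we have `eˣ + 1 = 2(1 - t)`, and summation by parts turns
`(1 - t) · ∑_{k ≤ N} c_k t^k`, where `c_k = ∑_{j ≤ k} 2^j/j`, into `∑_{k ≤ N} (1 - eˣ)^k/k`
up to a multiple of `t^(N+1)`. That sum is a truncation of `-log(1 - (1 - eˣ)) = -x`, so it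
agrees with `-x` modulo `x^(N+1)`. Hence `2x/(eˣ + 1) ≡ -∑_{k ≤ N} c_k t^k` modulo `x^(N+1)`,
and expanding `t^k = (-1/2)^k (eˣ - 1)^k` with `n! [xⁿ] (eˣ - 1)^k = k! S(n,k)` gives the formula. -/

open PowerSeries Finset Nat

theorem PowerSeries.X_pow_succ_dvd_of_derivative {R : Type*} [CommRing R] [IsAddTorsionFree R]
    {f : R⟦X⟧} {n : ℕ} (hf : constantCoeff f = 0) (hD : X ^ n ∣ d⁄dX R f) :
    X ^ (n + 1) ∣ f := by
  rw [X_pow_dvd_iff] at hD ⊢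
  rintro (_ | m) hm
  · simpa using hf
  · have h := hD m (by omega)
    rw [coeff_derivative, ← Nat.cast_add_one, mul_comm, ← nsmul_eq_mul] at h
    exact (nsmul_eq_zero_iff_right m.succ_ne_zero).mp h

theorem one_sub_mul_sum_cumsum_mul_pow {R : Type*} [CommRing R] (b : ℕ → R) (t : R) (N : ℕ) :
    (1 - t) * ∑ k ∈ Icc 1 N, (∑ j ∈ Icc 1 k, b j) * t ^ k =
      ∑ k ∈ Icc 1 N, b k * t ^ k - (∑ j ∈ Icc 1 N, b j) * t ^ (N + 1) := by
  induction N with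
  | zero => simp
  | succ N ih =>
    rw [sum_Icc_succ_top (by omega), sum_Icc_succ_top (by omega), sum_Icc_succ_top (by omega),
      mul_add, ih]
    ring

theorem derivative_exp_sub_one_pow_succ (A : Type*) [CommRing A] [Algebra ℚ A] (k : ℕ) :
    d⁄dX A ((exp A - 1) ^ (k + 1)) =
      (k + 1 : A⟦X⟧) * ((exp A - 1) ^ (k + 1) + (exp A - 1) ^ k) := by
  rw [derivative_pow, map_sub, derivative_exp, Derivation.map_one_eq_zero]
  push_cast
  ring

theorem factorial_mul_coeff_exp_sub_one_pow (A : Type*) [CommRing A] [Algebra ℚ A] (n k : ℕ) :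
    (n ! : A) * coeff n ((exp A - 1) ^ k) = k ! * stirlingSnd n k := by
  induction n generalizing k with
  | zero => cases k <;> simp [stirlingSnd, constantCoeff_exp]
  | succ n ih =>
    cases k with
    | zero => simp [stirlingSnd, coeff_one]
    | succ k =>
      have h := coeff_derivative ((exp A - 1) ^ (k + 1)) n
      rw [derivative_exp_sub_one_pow_succ, ← Nat.cast_add_one, ← map_natCast (C (R := A)),
        coeff_C_mul, map_add] at h
      calc ((n + 1) ! : A) * coeff (n + 1) ((exp A - 1) ^ (k + 1))
          = n ! * (coeff (n + 1) ((exp A - 1) ^ (k + 1)) * (n + 1)) := by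
            push_cast [factorial_succ]; ring
        _ = (k + 1) * (n ! * coeff n ((exp A - 1) ^ (k + 1)) +
              n ! * coeff n ((exp A - 1) ^ k)) := by
            rw [← h]; push_cast; ring
        _ = (k + 1) ! * stirlingSnd (n + 1) (k + 1) := by
            rw [ih, ih, stirlingSnd]; push_cast [factorial_succ]; ring

theorem factorial_mul_coeff_pow_half_one_sub_exp (n k : ℕ) :
    (n ! : ℚ) * coeff n ((C 2⁻¹ * (1 - exp ℚ)) ^ k) =
      (-1) ^ k * k ! / 2 ^ k * stirlingSnd n k := by
  rw [show C 2⁻¹ * (1 - exp ℚ) = C (-2⁻¹) * (exp ℚ - 1) by rw [map_neg]; ring, mul_pow,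
    ← map_pow, coeff_C_mul, mul_left_comm, factorial_mul_coeff_exp_sub_one_pow, neg_pow, inv_pow]
  ring

theorem derivative_sum_inv_mul_one_sub_exp_pow (N : ℕ) :
    d⁄dX ℚ (∑ j ∈ Icc 1 N, C (j : ℚ)⁻¹ * (1 - exp ℚ) ^ j) =
      (1 - exp ℚ) ^ N - 1 := by
  have hterm : ∀ j ∈ Icc 1 N, d⁄dX ℚ (C (j : ℚ)⁻¹ * (1 - exp ℚ) ^ j) =
      (1 - exp ℚ) ^ (j - 1) * ((1 - exp ℚ) - 1) := by
    intro j hj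
    have hj : (j : ℚ) ≠ 0 := by simp at hj; exact_mod_cast (by omega : j ≠ 0)
    have hC : C (j : ℚ)⁻¹ * C (j : ℚ) = 1 := by
      rw [← map_mul, inv_mul_cancel₀ hj, map_one]
    rw [Derivation.leibniz, derivative_C, smul_zero, add_zero, derivative_pow, map_sub,
      derivative_exp, Derivation.map_one_eq_zero, smul_eq_mul, ← map_natCast (C (R := ℚ))]
    linear_combination (-(1 - exp ℚ) ^ (j - 1) * exp ℚ) * hC
  rw [map_sum, sum_congr rfl hterm, ← sum_mul, ← Ico_add_one_right_eq_Icc, sum_Ico_eq_sum_range]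
  simp only [add_tsub_cancel_right, add_tsub_cancel_left, geom_sum_mul]

theorem X_pow_succ_dvd_X_add_sum_inv_mul_one_sub_exp_pow (N : ℕ) :
    X ^ (N + 1) ∣ X + ∑ j ∈ Icc 1 N, C (j : ℚ)⁻¹ * (1 - exp ℚ) ^ j := by
  have hX : X ∣ 1 - exp ℚ := X_dvd_iff.mpr (by simp [constantCoeff_exp])
  refine X_pow_succ_dvd_of_derivative ?_ ?_
  · simp only [map_add, constantCoeff_X, map_sum, map_mul, constantCoeff_C, map_pow, map_sub,
      map_one, constantCoeff_exp, sub_self, zero_add]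
    exact sum_eq_zero fun j hj => by rw [zero_pow (by simp at hj; omega), mul_zero]
  · rw [map_add, derivative_X, derivative_sum_inv_mul_one_sub_exp_pow, add_sub_cancel]
    exact pow_dvd_pow_of_dvd hX N

theorem X_pow_succ_dvd_genocchi_series_add_sum (N : ℕ) :
    X ^ (N + 1) ∣ 2 * X * (exp ℚ + 1)⁻¹ +
      ∑ k ∈ Icc 1 N,
        C (∑ j ∈ Icc 1 k, 2 ^ j / (j : ℚ)) * (C 2⁻¹ * (1 - exp ℚ)) ^ k := by
  set t := C 2⁻¹ * (1 - exp ℚ) with ht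
  set F := ∑ k ∈ Icc 1 N, C (∑ j ∈ Icc 1 k, 2 ^ j / (j : ℚ)) * t ^ k with hF
  have hC2 : (2 : ℚ⟦X⟧) * C 2⁻¹ = 1 := by rw [← map_ofNat C 2, ← map_mul]; norm_num
  have hE : exp ℚ + 1 = 2 * (1 - t) := by linear_combination (1 - exp ℚ) * hC2
  have hinv : (exp ℚ + 1)⁻¹ * (exp ℚ + 1) = 1 :=
    PowerSeries.inv_mul_cancel _ (by simp [constantCoeff_exp])
  have hL : ∑ k ∈ Icc 1 N, C (2 ^ k / (k : ℚ)) * t ^ k =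
      ∑ k ∈ Icc 1 N, C (k : ℚ)⁻¹ * (1 - exp ℚ) ^ k := by
    refine sum_congr rfl fun k _ => ?_
    rw [ht, mul_pow, ← map_pow, ← mul_assoc, ← map_mul, div_mul_eq_mul_div, ← mul_pow]
    norm_num
  have hsum : 2 * X + (exp ℚ + 1) * F =
      2 * (X + ∑ k ∈ Icc 1 N, C (k : ℚ)⁻¹ * (1 - exp ℚ) ^ k) -
        2 * (C (∑ j ∈ Icc 1 N, 2 ^ j / (j : ℚ)) * t ^ (N + 1)) := by
    simp only [hF, map_sum]
    rw [hE, mul_assoc, one_sub_mul_sum_cumsum_mul_pow, ← map_sum, hL]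
    ring
  have htX : X ∣ t := X_dvd_iff.mpr (by simp [ht, constantCoeff_exp])
  rw [show 2 * X * (exp ℚ + 1)⁻¹ + F = (exp ℚ + 1)⁻¹ * (2 * X + (exp ℚ + 1) * F) by
    linear_combination (-F) * hinv, hsum]
  exact (dvd_sub (dvd_mul_of_dvd_right (X_pow_succ_dvd_X_add_sum_inv_mul_one_sub_exp_pow N) _)
    (dvd_mul_of_dvd_right (dvd_mul_of_dvd_right (pow_dvd_pow_of_dvd htX _) _) _)).mul_left _

open Finset in
theorem stmt_5_general (n : ℕ) :
    genocchi n = ∑ k ∈ Finset.Icc 1 n, (-1 : ℚ) ^ (k - 1) *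
      (((Nat.factorial k : ℚ) / 2 ^ k) * ∑ j ∈ Finset.Icc 1 k, (2 ^ j / (j : ℚ))) *
      (stirlingSnd n k : ℚ) := by
  have hcoeff := X_pow_dvd_iff.mp (X_pow_succ_dvd_genocchi_series_add_sum n) n n.lt_succ_self
  rw [map_add, add_eq_zero_iff_eq_neg] at hcoeff
  rw [genocchi, hcoeff, map_sum, ← sum_neg_distrib, mul_sum]
  refine sum_congr rfl fun k hk => ?_
  obtain ⟨i, rfl⟩ : ∃ i, k = i + 1 := ⟨k - 1, by simp at hk; omega⟩
  rw [coeff_C_mul, mul_neg, mul_left_comm, factorial_mul_coeff_pow_half_one_sub_exp,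
    Nat.add_sub_cancel]
  ring

open Finset in
theorem stmt_5 (n : ℕ) (hn : 1 ≤ n) :
    genocchi n = ∑ k ∈ Finset.Icc 1 n, (-1 : ℚ) ^ (k - 1) *
      (((Nat.factorial k : ℚ) / 2 ^ k) * ∑ j ∈ Finset.Icc 1 k, (2 ^ j / (j : ℚ))) *
      (stirlingSnd n k : ℚ) :=
  stmt_5_general n
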